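/- Let E be a field of characteristic zero with a derivation ∂, let K be a subfield of E closed under ∂, and let ρ ∈ E be nonzero. Then the smallest subfield of E containing K and all iterated derivatives ∂ⁿρ (n ≥ 0) coincides with the smallest subfield of E containing K, the element ρ, and all iterated derivatives ∂ⁿ(∂ρ/ρ) (n ≥ 0). -/

import Mathlib

/-!
By the quotient rule, the subfield generated by a set `s` is stable under a derivation as soon as
the derivation maps `s` into it. The derivation maps each of the two generating sets into the
subfield that set generates: the first by construction, the second because `∂ρ = ρ · (∂ρ/ρ)`. So each generated subfield is a differential
field, and therefore contains the iterated derivatives of `ρ` and of `∂ρ/ρ`, which generate the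
other one.
-/

open Set

theorem Set.mapsTo_union_range_iterate {α : Type*} {f : α → α} {s : Set α} (hs : MapsTo f s s)
    (a : α) : MapsTo f (s ∪ range fun n ↦ f^[n] a) (s ∪ range fun n ↦ f^[n] a) := by
  rintro x (hx | ⟨n, rfl⟩)
  · exact Or.inl (hs hx)
  · exact Or.inr ⟨n + 1, Function.iterate_succ_apply' f n a⟩

namespace Derivation

variable {R E : Type*} [CommRing R] [Field E] [Algebra R E] (D : Derivation R E E)

theorem mapsTo_subfieldClosure {s : Set E} (hs : MapsTo D s (Subfield.closure s)) :
    MapsTo D (Subfield.closure s) (Subfield.closure s) := by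
  intro x hx
  induction hx using Subfield.closure_induction with
  | mem x hx => exact hs hx
  | one => simp
  | add x y _ _ hx hy => simpa using add_mem hx hy
  | neg x _ hx => simpa using neg_mem hx
  | inv x hx₀ hx =>
    rw [leibniz_inv, smul_eq_mul]
    exact mul_mem (neg_mem (pow_mem (inv_mem hx₀) 2)) hx
  | mul x y hx₀ hy₀ hx hy =>
    rw [leibniz, smul_eq_mul, smul_eq_mul]
    exact add_mem (mul_mem hx₀ hy) (mul_mem hy₀ hx)

theorem iterate_mem_subfieldClosure {s : Set E} (hs : MapsTo D s (Subfield.closure s)) {x : E}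
    (hx : x ∈ Subfield.closure s) (n : ℕ) : D^[n] x ∈ Subfield.closure s :=
  (D.mapsTo_subfieldClosure hs).iterate n hx

end Derivation

def Derivation.ofLeibniz {E : Type*} [Field E] (dt : E → E)
    (hadd : ∀ a b : E, dt (a + b) = dt a + dt b)
    (hmul : ∀ a b : E, dt (a * b) = a * dt b + dt a * b) : Derivation ℤ E E :=
  Derivation.mk' (AddMonoidHom.mk' dt hadd).toIntLinearMap fun a b ↦ by
    simp [hmul, mul_comm b]

theorem diff_field_gen_by_sol_eq_gen_by_logderiv_general
    (E : Type*) [Field E]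
    (dt : E → E)
    (hadd : ∀ a b : E, dt (a + b) = dt a + dt b)
    (hmul : ∀ a b : E, dt (a * b) = a * dt b + dt a * b)
    (K : Subfield E)
    (hK : ∀ a ∈ K, dt a ∈ K)
    (ρ : E) (hρ : ρ ≠ 0) :
    Subfield.closure ((K : Set E) ∪ Set.range (fun n : ℕ => dt^[n] ρ)) =
      Subfield.closure
        (insert ρ ((K : Set E) ∪ Set.range (fun n : ℕ => dt^[n] (dt ρ / ρ)))) := by
  set D := Derivation.ofLeibniz dt hadd hmul
  have hD : ⇑D = dt := rfl
  rw [← hD] at hK ⊢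
  set L := Subfield.closure ((K : Set E) ∪ range fun n ↦ D^[n] ρ)
  set M := Subfield.closure (insert ρ ((K : Set E) ∪ range fun n ↦ D^[n] (D ρ / ρ)))
  have hL : MapsTo D ((K : Set E) ∪ range fun n ↦ D^[n] ρ) L :=
    (mapsTo_union_range_iterate hK ρ).mono_right Subfield.subset_closure
  have hM : MapsTo D (insert ρ ((K : Set E) ∪ range fun n ↦ D^[n] (D ρ / ρ))) M := by
    rintro x (rfl | hx)
    · rw [← mul_div_cancel₀ (D x) hρ]
      exact mul_mem (Subfield.subset_closure (mem_insert _ _))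
        (Subfield.subset_closure (Or.inr (Or.inr ⟨0, rfl⟩)))
    · exact Subfield.subset_closure (subset_insert _ _ (mapsTo_union_range_iterate hK _ hx))
  apply le_antisymm <;> refine Subfield.closure_le.2 ?_
  · rintro x (hx | ⟨n, rfl⟩)
    · exact Subfield.subset_closure (Or.inr (Or.inl hx))
    · exact D.iterate_mem_subfieldClosure hM (Subfield.subset_closure (mem_insert _ _)) n
  · have hρL : ρ ∈ L := Subfield.subset_closure (Or.inr ⟨0, rfl⟩)
    rintro x (rfl | hx | ⟨n, rfl⟩)
    · exact hρL
    · exact Subfield.subset_closure (Or.inl hx)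
    · exact D.iterate_mem_subfieldClosure hL
        (div_mem (Subfield.subset_closure (Or.inr ⟨1, rfl⟩)) hρL) n

/-- **From the proof of Lemma 4.10 of the paper**: `K⟨ρ⟩_∂ = K(ρ)⟨∂ρ/ρ⟩_∂`.
Let `E` be a field of characteristic zero with a derivation `∂`, `K` a subfield closed
under `∂`, and `ρ ∈ E` nonzero.  Then the subfield of `E` generated by `K` and all the
iterated derivatives `∂ⁿρ` coincides with the subfield generated by `K`, the element
`ρ`, and all the iterated derivatives `∂ⁿ(∂ρ/ρ)`. -/
theorem diff_field_gen_by_sol_eq_gen_by_logderiv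
    (E : Type*) [Field E] [CharZero E]
    (dt : E → E)
    (hadd : ∀ a b : E, dt (a + b) = dt a + dt b)
    (hmul : ∀ a b : E, dt (a * b) = a * dt b + dt a * b)
    (K : Subfield E)
    (hK : ∀ a ∈ K, dt a ∈ K)
    (ρ : E) (hρ : ρ ≠ 0) :
    Subfield.closure ((K : Set E) ∪ Set.range (fun n : ℕ => dt^[n] ρ)) =
      Subfield.closure
        (insert ρ ((K : Set E) ∪ Set.range (fun n : ℕ => dt^[n] (dt ρ / ρ)))) :=
  diff_field_gen_by_sol_eq_gen_by_logderiv_general E dt hadd hmul K hK ρ hρ
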